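/- (Existence of SCL normal forms.) For every closed term P ∈ S_A there exists a term Q in SNF such that EqFSCL ⊢ P = Q. -/

import Mathlib

/-!
Pass to the quotient `SCL A` of closed terms by derivability, where the axioms become equations
that can be rewritten with. Values of T-terms satisfy `x ∨ T = x` and values of F-terms
`x ∧ F = x`; under such side conditions the axioms yield restricted distributive and
absorption laws. With these one checks, by induction along the grammar, that the classes
containing an SNF term are closed under `¬` and `∧`, hence under `x ∨ y = ¬(¬x ∧ ¬y)`, and
that they contain `T`, `F` and every atom `a = T ∧ ((a ∧ T) ∨ F)`.
-/

/-- Closed sequential propositional statements over `A`: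
`P ::= a | T | F | ¬P | P ∧❛ P | P ∨❛ P`. -/
inductive STerm (A : Type) : Type
  | atom : A → STerm A
  | tt : STerm A
  | ff : STerm A
  | neg : STerm A → STerm A
  | and : STerm A → STerm A → STerm A
  | or : STerm A → STerm A → STerm A

/-- Derivability from the axiom set EqFSCL: the least congruence (w.r.t. `¬`, `∧❛`, `∨❛`)
on closed terms containing all closed substitution instances of the axioms (F1)-(F10). -/
inductive EqFSCL {A : Type} : STerm A → STerm A → Prop
  | refl (P) : EqFSCL P P
  | symm {P Q} : EqFSCL P Q → EqFSCL Q P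
  | trans {P Q R} : EqFSCL P Q → EqFSCL Q R → EqFSCL P R
  | neg_congr {P Q} : EqFSCL P Q → EqFSCL (.neg P) (.neg Q)
  | and_congr {P P' Q Q'} : EqFSCL P Q → EqFSCL P' Q' → EqFSCL (.and P P') (.and Q Q')
  | or_congr {P P' Q Q'} : EqFSCL P Q → EqFSCL P' Q' → EqFSCL (.or P P') (.or Q Q')
  | F1 : EqFSCL .ff (.neg .tt)
  | F2 (x y) : EqFSCL (.or x y) (.neg (.and (.neg x) (.neg y)))
  | F3 (x) : EqFSCL (.neg (.neg x)) x
  | F4 (x) : EqFSCL (.and .tt x) x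
  | F5 (x) : EqFSCL (.or x .ff) x
  | F6 (x) : EqFSCL (.and .ff x) .ff
  | F7 (x y z) : EqFSCL (.and (.and x y) z) (.and x (.and y z))
  | F8 (x) : EqFSCL (.and (.neg x) .ff) (.and x .ff)
  | F9 (x y) : EqFSCL (.or (.and x .ff) y) (.and (.or x .tt) y)
  | F10 (x y z) : EqFSCL (.or (.and x y) (.and z .ff))
      (.and (.or x (.and z .ff)) (.or y (.and z .ff)))

/-- T-terms: `P^T ::= T | (a ∧❛ P^T) ∨❛ P^T`. -/
inductive IsTTerm {A : Type} : STerm A → Prop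
  | tt : IsTTerm .tt
  | node (a : A) {P Q} : IsTTerm P → IsTTerm Q → IsTTerm (.or (.and (.atom a) P) Q)

/-- F-terms: `P^F ::= F | (a ∨❛ P^F) ∧❛ P^F`. -/
inductive IsFTerm {A : Type} : STerm A → Prop
  | ff : IsFTerm .ff
  | node (a : A) {P Q} : IsFTerm P → IsFTerm Q → IsFTerm (.and (.or (.atom a) P) Q)

/-- ℓ-terms: `P^ℓ ::= (a ∧❛ P^T) ∨❛ P^F | (¬a ∧❛ P^T) ∨❛ P^F`. -/
inductive IsLTerm {A : Type} : STerm A → Prop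
  | pos (a : A) {P Q} : IsTTerm P → IsFTerm Q → IsLTerm (.or (.and (.atom a) P) Q)
  | neg (a : A) {P Q} : IsTTerm P → IsFTerm Q → IsLTerm (.or (.and (.neg (.atom a)) P) Q)

mutual
/-- The category `P^c ::= P^ℓ | P^* ∧❛ P^d`. -/
inductive IsCTerm {A : Type} : STerm A → Prop
  | ell {P} : IsLTerm P → IsCTerm P
  | and {P Q} : IsStarTerm P → IsDTerm Q → IsCTerm (.and P Q)

/-- The category `P^d ::= P^ℓ | P^* ∨❛ P^c`. -/
inductive IsDTerm {A : Type} : STerm A → Prop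
  | ell {P} : IsLTerm P → IsDTerm P
  | or {P Q} : IsStarTerm P → IsCTerm Q → IsDTerm (.or P Q)

/-- *-terms: `P^* ::= P^c | P^d`. -/
inductive IsStarTerm {A : Type} : STerm A → Prop
  | c {P} : IsCTerm P → IsStarTerm P
  | d {P} : IsDTerm P → IsStarTerm P
end

/-- SCL Normal Forms: `P ::= P^T | P^F | P^T ∧❛ P^*`. -/
def IsSNF {A : Type} (P : STerm A) : Prop :=
  IsTTerm P ∨ IsFTerm P ∨ ∃ Q R : STerm A, IsTTerm Q ∧ IsStarTerm R ∧ P = .and Q R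

instance STerm.setoid (A : Type) : Setoid (STerm A) := ⟨EqFSCL, ⟨.refl, .symm, .trans⟩⟩

def SCL (A : Type) : Type := Quotient (STerm.setoid A)

namespace SCL

variable {A : Type}

def mk : STerm A → SCL A := Quotient.mk _

def T : SCL A := mk .tt

def F : SCL A := mk .ff

def atom (a : A) : SCL A := mk (.atom a)

instance : Neg (SCL A) := ⟨Quotient.map STerm.neg fun _ _ => EqFSCL.neg_congr⟩

protected def and : SCL A → SCL A → SCL A :=
  Quotient.map₂ STerm.and fun _ _ h _ _ h' => EqFSCL.and_congr h h'

protected def or : SCL A → SCL A → SCL A :=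
  Quotient.map₂ STerm.or fun _ _ h _ _ h' => EqFSCL.or_congr h h'

infixl:70 " ⋏ " => SCL.and

infixl:65 " ⋎ " => SCL.or

@[simp] theorem mk_tt : mk .tt = (T : SCL A) := rfl

@[simp] theorem mk_ff : mk .ff = (F : SCL A) := rfl

@[simp] theorem mk_and (P Q : STerm A) : mk (P.and Q) = mk P ⋏ mk Q := rfl

@[simp] theorem mk_or (P Q : STerm A) : mk (P.or Q) = mk P ⋎ mk Q := rfl

theorem mk_eq_mk {P Q : STerm A} : mk P = mk Q ↔ EqFSCL P Q := Quotient.eq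

instance : InvolutiveNeg (SCL A) where
  neg_neg := Quotient.ind fun P => Quotient.sound (.F3 P)

theorem neg_T : -T = (F : SCL A) := Quotient.sound (.symm .F1)

theorem or_eq_neg_and (x y : SCL A) : x ⋎ y = -(-x ⋏ -y) := by
  induction x, y using Quotient.inductionOn₂ with | h P Q => exact Quotient.sound (.F2 P Q)

theorem T_and (x : SCL A) : T ⋏ x = x :=
  Quotient.inductionOn x fun P => Quotient.sound (.F4 P)

theorem or_F (x : SCL A) : x ⋎ F = x :=
  Quotient.inductionOn x fun P => Quotient.sound (.F5 P)

theorem F_and (x : SCL A) : F ⋏ x = F :=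
  Quotient.inductionOn x fun P => Quotient.sound (.F6 P)

protected theorem and_assoc (x y z : SCL A) : x ⋏ y ⋏ z = x ⋏ (y ⋏ z) := by
  induction x, y, z using Quotient.inductionOn₃ with
  | h P Q R => exact Quotient.sound (.F7 P Q R)

theorem neg_and_F (x : SCL A) : -x ⋏ F = x ⋏ F :=
  Quotient.inductionOn x fun P => Quotient.sound (.F8 P)

theorem and_F_or (x y : SCL A) : x ⋏ F ⋎ y = (x ⋎ T) ⋏ y := by
  induction x, y using Quotient.inductionOn₂ with | h P Q => exact Quotient.sound (.F9 P Q)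

theorem and_or_and_F (x y z : SCL A) :
    x ⋏ y ⋎ z ⋏ F = (x ⋎ z ⋏ F) ⋏ (y ⋎ z ⋏ F) := by
  induction x, y, z using Quotient.inductionOn₃ with
  | h P Q R => exact Quotient.sound (.F10 P Q R)

theorem neg_F : -F = (T : SCL A) := by rw [← neg_T, neg_neg]

theorem neg_or (x y : SCL A) : -(x ⋎ y) = -x ⋏ -y := by rw [or_eq_neg_and, neg_neg]

theorem neg_and (x y : SCL A) : -(x ⋏ y) = -x ⋎ -y := by rw [or_eq_neg_and, neg_neg, neg_neg]

theorem and_T (x : SCL A) : x ⋏ T = x :=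
  neg_injective <| by rw [neg_and, neg_T, or_F]

theorem F_or (x : SCL A) : F ⋎ x = x := by rw [or_eq_neg_and, neg_F, T_and, neg_neg]

theorem T_or (x : SCL A) : T ⋎ x = T := by rw [or_eq_neg_and, neg_T, F_and, neg_F]

protected theorem or_assoc (x y z : SCL A) : x ⋎ y ⋎ z = x ⋎ (y ⋎ z) :=
  neg_injective <| by simp only [neg_or, SCL.and_assoc]

theorem neg_or_T (x : SCL A) : -x ⋎ T = x ⋎ T :=
  neg_injective <| by rw [neg_or, neg_or, neg_neg, neg_T, neg_and_F]

theorem or_T_and_F (x : SCL A) : (x ⋎ T) ⋏ F = x ⋏ F := by rw [← and_F_or, or_F]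

theorem or_and_F (x y : SCL A) : (x ⋎ y) ⋏ F = -x ⋏ (y ⋏ F) := by
  rw [or_eq_neg_and, neg_and_F, SCL.and_assoc, neg_and_F]

theorem and_or_of_and_F {z : SCL A} (hz : z ⋏ F = z) (x y : SCL A) :
    x ⋏ y ⋎ z = (x ⋎ z) ⋏ (y ⋎ z) := by
  rw [← hz, and_or_and_F]

theorem or_and_of_or_T {z : SCL A} (hz : z ⋎ T = z) (x y : SCL A) :
    (x ⋎ y) ⋏ z = x ⋏ z ⋎ y ⋏ z := by
  refine neg_injective ?_
  rw [← hz]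
  simp only [neg_or, neg_and, neg_T]
  exact and_or_and_F _ _ _

theorem or_and_of_and_F_of_or_T {y z : SCL A} (hy : y ⋏ F = y) (hz : z ⋎ T = z) (x : SCL A) :
    (x ⋎ y) ⋏ z = x ⋏ z ⋎ y := by
  have hzy : z ⋎ y = z := by rw [← hz, SCL.or_assoc, T_or]
  rw [and_or_of_and_F hy, hzy]

theorem neg_or_and_of_and_F {y z : SCL A} (hy : y ⋏ F = y) (hz : z ⋏ F = z) (x : SCL A) :
    (-x ⋎ y) ⋏ z = (x ⋎ z) ⋏ y := by
  have hzT : (z ⋎ T) ⋎ T = z ⋎ T := by rw [SCL.or_assoc, T_or]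
  calc (-x ⋎ y) ⋏ z = ((-x ⋎ y) ⋏ (z ⋎ T)) ⋏ F := by rw [SCL.and_assoc, or_T_and_F, hz]
    _ = -(-x ⋏ (z ⋎ T)) ⋏ y := by
      rw [or_and_of_and_F_of_or_T hy hzT, or_and_F, hy]
    _ = (x ⋎ z) ⋏ y := by rw [neg_and, neg_neg, neg_or, neg_T, neg_and_F, hz]

theorem neg_and_F_of_or_T {x : SCL A} (hx : x ⋎ T = x) : -x ⋏ F = -x := by
  rw [← neg_T, ← neg_or, hx]

theorem neg_and_or_of_or_T {y z : SCL A} (hy : y ⋎ T = y) (hz : z ⋎ T = z) (x : SCL A) :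
    -x ⋏ y ⋎ z = x ⋏ z ⋎ y :=
  neg_injective <| by
    rw [neg_or, neg_or, neg_and, neg_and, neg_neg,
      neg_or_and_of_and_F (neg_and_F_of_or_T hz) (neg_and_F_of_or_T hy)]

theorem or_and_absorb {w : SCL A} (hw : w ⋏ F = w) (x y : SCL A) :
    (x ⋎ y) ⋏ w = (x ⋎ y ⋏ w) ⋏ w := by
  have hwT : (w ⋎ T) ⋎ T = w ⋎ T := by rw [SCL.or_assoc, T_or]
  have hyw : y ⋏ w ⋏ F = y ⋏ w := by rw [SCL.and_assoc, hw]
  have hnw : -w ⋏ F ⋏ F = -w ⋏ F := by rw [SCL.and_assoc, F_and]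
  calc (x ⋎ y) ⋏ w = ((x ⋎ y) ⋏ (w ⋎ T)) ⋏ F := by rw [SCL.and_assoc, or_T_and_F, hw]
    _ = -(x ⋏ (w ⋎ T)) ⋏ (y ⋏ w) := by
      rw [or_and_of_or_T hwT, or_and_F, SCL.and_assoc, or_T_and_F, hw]
    _ = (-x ⋎ -w ⋏ F) ⋏ (y ⋏ w) := by rw [neg_and, neg_or, neg_T]
    _ = (x ⋎ y ⋏ w) ⋏ w := by rw [neg_or_and_of_and_F hnw hyw, neg_and_F, hw]

theorem and_eq_of_and_F {x : SCL A} (hx : x ⋏ F = x) (y : SCL A) : x ⋏ y = x := by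
  rw [← hx, SCL.and_assoc, F_and]

theorem neg_and_of_or_T {x : SCL A} (hx : x ⋎ T = x) (y : SCL A) : -(x ⋏ y) = x ⋏ -y := by
  rw [← hx, ← and_F_or, neg_or, neg_and, neg_F, neg_or_T, hx]

def HasForm (p : STerm A → Prop) (x : SCL A) : Prop := ∃ P, p P ∧ mk P = x

def IsLiteral (l : SCL A) : Prop := ∃ a, l = atom a ∨ l = -atom a

theorem IsLiteral.neg {l : SCL A} : IsLiteral l → IsLiteral (-l)
  | ⟨a, .inl h⟩ => ⟨a, .inr (h ▸ rfl)⟩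
  | ⟨a, .inr h⟩ => ⟨a, .inl (by rw [h, neg_neg])⟩

theorem hasForm_lTerm_iff {x : SCL A} :
    HasForm IsLTerm x ↔ ∃ l p q, IsLiteral l ∧ HasForm IsTTerm p ∧ HasForm IsFTerm q ∧
      x = l ⋏ p ⋎ q := by
  constructor
  · rintro ⟨_, ⟨a, hP, hQ⟩ | ⟨a, hP, hQ⟩, rfl⟩
    exacts [⟨_, _, _, ⟨a, .inl rfl⟩, ⟨_, hP, rfl⟩, ⟨_, hQ, rfl⟩, rfl⟩,
      ⟨_, _, _, ⟨a, .inr rfl⟩, ⟨_, hP, rfl⟩, ⟨_, hQ, rfl⟩, rfl⟩]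
  · rintro ⟨_, _, _, ⟨a, rfl | rfl⟩, ⟨P, hP, rfl⟩, ⟨Q, hQ, rfl⟩, rfl⟩
    exacts [⟨_, .pos a hP hQ, rfl⟩, ⟨_, .neg a hP hQ, rfl⟩]

namespace HasForm

variable {x y : SCL A}

theorem mono {p q : STerm A → Prop} (h : ∀ {P}, p P → q P) : HasForm p x → HasForm q x
  | ⟨P, hP, hx⟩ => ⟨P, h hP, hx⟩

protected theorem and {p q r : STerm A → Prop} (hr : ∀ {P Q}, p P → q Q → r (P.and Q)) :
    HasForm p x → HasForm q y → HasForm r (x ⋏ y)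
  | ⟨_, hP, hx⟩, ⟨_, hQ, hy⟩ => ⟨_, hr hP hQ, hx ▸ hy ▸ rfl⟩

protected theorem or {p q r : STerm A → Prop} (hr : ∀ {P Q}, p P → q Q → r (P.or Q)) :
    HasForm p x → HasForm q y → HasForm r (x ⋎ y)
  | ⟨_, hP, hx⟩, ⟨_, hQ, hy⟩ => ⟨_, hr hP hQ, hx ▸ hy ▸ rfl⟩

theorem tTerm_T : HasForm IsTTerm (T : SCL A) := ⟨_, .tt, rfl⟩

theorem fTerm_F : HasForm IsFTerm (F : SCL A) := ⟨_, .ff, rfl⟩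

theorem tTerm_node (a : A) :
    HasForm IsTTerm x → HasForm IsTTerm y → HasForm IsTTerm (atom a ⋏ x ⋎ y)
  | ⟨_, hP, hx⟩, ⟨_, hQ, hy⟩ => ⟨_, .node a hP hQ, hx ▸ hy ▸ rfl⟩

theorem fTerm_node (a : A) :
    HasForm IsFTerm x → HasForm IsFTerm y → HasForm IsFTerm ((atom a ⋎ x) ⋏ y)
  | ⟨_, hP, hx⟩, ⟨_, hQ, hy⟩ => ⟨_, .node a hP hQ, hx ▸ hy ▸ rfl⟩

theorem or_T : HasForm IsTTerm x → x ⋎ T = x := by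
  rintro ⟨t, ht, rfl⟩
  induction ht with
  | tt => exact T_or T
  | node a _ _ _ ihQ => rw [mk_or, SCL.or_assoc, ihQ]

theorem and_F : HasForm IsFTerm x → x ⋏ F = x := by
  rintro ⟨f, hf, rfl⟩
  induction hf with
  | ff => exact F_and F
  | node a _ _ _ ihQ => rw [mk_and, SCL.and_assoc, ihQ]

theorem tTerm_and (hx : HasForm IsTTerm x) (hy : HasForm IsTTerm y) :
    HasForm IsTTerm (x ⋏ y) := by
  obtain ⟨t, ht, rfl⟩ := hx
  induction ht with
  | tt => rwa [mk_tt, T_and]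
  | node a _ _ ihP ihQ =>
    rw [mk_or, mk_and, or_and_of_or_T hy.or_T, SCL.and_assoc]
    exact ihP.tTerm_node a ihQ

theorem tTerm_neg : HasForm IsTTerm x → HasForm IsFTerm (-x) := by
  rintro ⟨t, ht, rfl⟩
  induction ht with
  | tt => exact neg_T ▸ fTerm_F
  | node a _ _ ihP ihQ =>
    rw [mk_or, neg_or, mk_and, neg_and, neg_or_and_of_and_F ihP.and_F ihQ.and_F]
    exact ihQ.fTerm_node a ihP

theorem fTerm_neg : HasForm IsFTerm x → HasForm IsTTerm (-x) := by
  rintro ⟨f, hf, rfl⟩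
  induction hf with
  | ff => exact neg_F ▸ tTerm_T
  | node a _ _ ihP ihQ =>
    rw [mk_and, neg_and, mk_or, neg_or, neg_and_or_of_or_T ihP.or_T ihQ.or_T]
    exact ihQ.tTerm_node a ihP

theorem tTerm_and_fTerm (hx : HasForm IsTTerm x) (hy : HasForm IsFTerm y) :
    HasForm IsFTerm (x ⋏ y) := by
  rw [← neg_neg (x ⋏ y), neg_and_of_or_T hx.or_T]
  exact (hx.tTerm_and hy.fTerm_neg).tTerm_neg

theorem fTerm_or (hx : HasForm IsFTerm x) (hy : HasForm IsFTerm y) :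
    HasForm IsFTerm (x ⋎ y) := by
  obtain ⟨f, hf, rfl⟩ := hx
  induction hf with
  | ff => rwa [mk_ff, F_or]
  | node a _ _ ihP ihQ =>
    rw [mk_and, mk_or, and_or_of_and_F hy.and_F, SCL.or_assoc]
    exact ihP.fTerm_node a ihQ

theorem lTerm_neg (h : HasForm IsLTerm x) : HasForm IsLTerm (-x) := by
  obtain ⟨l, p, q, hl, hp, hq, rfl⟩ := hasForm_lTerm_iff.1 h
  rw [neg_or, neg_and, or_and_of_and_F_of_or_T hp.tTerm_neg.and_F hq.fTerm_neg.or_T]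
  exact hasForm_lTerm_iff.2 ⟨_, _, _, hl.neg, hq.fTerm_neg, hp.tTerm_neg, rfl⟩

theorem lTerm_and_tTerm (hx : HasForm IsLTerm x) (hy : HasForm IsTTerm y) :
    HasForm IsLTerm (x ⋏ y) := by
  obtain ⟨l, p, q, hl, hp, hq, rfl⟩ := hasForm_lTerm_iff.1 hx
  rw [or_and_of_and_F_of_or_T hq.and_F hy.or_T, SCL.and_assoc]
  exact hasForm_lTerm_iff.2 ⟨_, _, _, hl, hp.tTerm_and hy, hq, rfl⟩

theorem lTerm_or_fTerm (hx : HasForm IsLTerm x) (hy : HasForm IsFTerm y) :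
    HasForm IsLTerm (x ⋎ y) := by
  obtain ⟨l, p, q, hl, hp, hq, rfl⟩ := hasForm_lTerm_iff.1 hx
  rw [SCL.or_assoc]
  exact hasForm_lTerm_iff.2 ⟨_, _, _, hl, hp, hq.fTerm_or hy, rfl⟩

theorem lTerm_and_fTerm (hx : HasForm IsLTerm x) (hy : HasForm IsFTerm y) :
    HasForm IsFTerm (x ⋏ y) := by
  obtain ⟨l, p, q, ⟨a, hl⟩, hp, hq, rfl⟩ := hasForm_lTerm_iff.1 hx
  have hpy := hp.tTerm_and_fTerm hy
  rw [← or_and_of_and_F_of_or_T hq.and_F hp.or_T, SCL.and_assoc]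
  rcases hl with rfl | rfl
  · exact hq.fTerm_node a hpy
  · rw [neg_or_and_of_and_F hq.and_F hpy.and_F]
    exact hpy.fTerm_node a hq

end HasForm

end SCL

open SCL

section StarTerms

variable {A : Type} {x y : SCL A}

mutual

theorem IsCTerm.hasForm_neg {s : STerm A} : IsCTerm s → HasForm IsDTerm (-mk s)
  | .ell h => (HasForm.lTerm_neg ⟨_, h, rfl⟩).mono .ell
  | .and hP hQ => by
    rw [mk_and, neg_and]
    exact .or IsDTerm.or hP.hasForm_neg hQ.hasForm_neg

theorem IsDTerm.hasForm_neg {s : STerm A} : IsDTerm s → HasForm IsCTerm (-mk s)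
  | .ell h => (HasForm.lTerm_neg ⟨_, h, rfl⟩).mono .ell
  | .or hP hQ => by
    rw [mk_or, neg_or]
    exact .and IsCTerm.and hP.hasForm_neg hQ.hasForm_neg

theorem IsStarTerm.hasForm_neg {s : STerm A} : IsStarTerm s → HasForm IsStarTerm (-mk s)
  | .c h => h.hasForm_neg.mono .d
  | .d h => h.hasForm_neg.mono .c

end

mutual

theorem IsCTerm.hasForm_and_tTerm {s : STerm A} (hy : HasForm IsTTerm y) :
    IsCTerm s → HasForm IsCTerm (mk s ⋏ y)
  | .ell h => (HasForm.lTerm_and_tTerm ⟨_, h, rfl⟩ hy).mono .ell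
  | .and hP hQ => by
    rw [mk_and, SCL.and_assoc]
    exact .and IsCTerm.and ⟨_, hP, rfl⟩ (hQ.hasForm_and_tTerm hy)

theorem IsDTerm.hasForm_and_tTerm {s : STerm A} (hy : HasForm IsTTerm y) :
    IsDTerm s → HasForm IsDTerm (mk s ⋏ y)
  | .ell h => (HasForm.lTerm_and_tTerm ⟨_, h, rfl⟩ hy).mono .ell
  | .or hP hQ => by
    rw [mk_or, or_and_of_or_T hy.or_T]
    exact .or IsDTerm.or (hP.hasForm_and_tTerm hy) (hQ.hasForm_and_tTerm hy)

theorem IsStarTerm.hasForm_and_tTerm {s : STerm A} (hy : HasForm IsTTerm y) :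
    IsStarTerm s → HasForm IsStarTerm (mk s ⋏ y)
  | .c h => (h.hasForm_and_tTerm hy).mono .c
  | .d h => (h.hasForm_and_tTerm hy).mono .d

end

/- The extra disjunct `b` (with `b = F` this is `s ∧ f`) is what lets the case `s = s' ∨ c`
absorb `c` into it. -/
mutual

theorem IsCTerm.hasForm_or_and {s : STerm A} {b f : SCL A} (hb : HasForm IsFTerm b)
    (hf : HasForm IsFTerm f) :
    IsCTerm s → HasForm IsFTerm ((mk s ⋎ b) ⋏ f)
  | .ell h => (HasForm.lTerm_or_fTerm ⟨_, h, rfl⟩ hb).lTerm_and_fTerm hf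
  | .and hP hQ => by
    rw [mk_and, and_or_of_and_F hb.and_F, SCL.and_assoc]
    exact hP.hasForm_or_and hb (hQ.hasForm_or_and hb hf)

theorem IsDTerm.hasForm_or_and {s : STerm A} {b f : SCL A} (hb : HasForm IsFTerm b)
    (hf : HasForm IsFTerm f) :
    IsDTerm s → HasForm IsFTerm ((mk s ⋎ b) ⋏ f)
  | .ell h => (HasForm.lTerm_or_fTerm ⟨_, h, rfl⟩ hb).lTerm_and_fTerm hf
  | .or hP hQ => by
    rw [mk_or, SCL.or_assoc, or_and_absorb hf.and_F]
    exact hP.hasForm_or_and (hQ.hasForm_or_and hb hf) hf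

theorem IsStarTerm.hasForm_or_and {s : STerm A} {b f : SCL A} (hb : HasForm IsFTerm b)
    (hf : HasForm IsFTerm f) :
    IsStarTerm s → HasForm IsFTerm ((mk s ⋎ b) ⋏ f)
  | .c h => h.hasForm_or_and hb hf
  | .d h => h.hasForm_or_and hb hf

end

mutual

theorem IsCTerm.hasForm_starTerm_and {s : STerm A} (hx : HasForm IsStarTerm x) :
    IsCTerm s → HasForm IsCTerm (x ⋏ mk s)
  | .ell h => .and IsCTerm.and hx ⟨_, .ell h, rfl⟩
  | .and hP hQ => by
    rw [mk_and, ← SCL.and_assoc]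
    exact .and IsCTerm.and ((hP.hasForm_starTerm_and hx).mono .c) ⟨_, hQ, rfl⟩

theorem IsStarTerm.hasForm_starTerm_and {s : STerm A} (hx : HasForm IsStarTerm x) :
    IsStarTerm s → HasForm IsCTerm (x ⋏ mk s)
  | .c h => h.hasForm_starTerm_and hx
  | .d h => .and IsCTerm.and hx ⟨_, h, rfl⟩

end

end StarTerms

namespace SCL.HasForm

variable {A : Type} {x y : SCL A}

theorem starTerm_neg : HasForm IsStarTerm x → HasForm IsStarTerm (-x)
  | ⟨_, h, hx⟩ => hx ▸ h.hasForm_neg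

theorem starTerm_and_tTerm : HasForm IsStarTerm x → HasForm IsTTerm y →
    HasForm IsStarTerm (x ⋏ y)
  | ⟨_, h, hx⟩, hy => hx ▸ h.hasForm_and_tTerm hy

theorem starTerm_and_fTerm : HasForm IsStarTerm x → HasForm IsFTerm y →
    HasForm IsFTerm (x ⋏ y)
  | ⟨_, h, hx⟩, hy => by
    have := h.hasForm_or_and fTerm_F hy
    rwa [or_F, hx] at this

theorem starTerm_and_starTerm (hx : HasForm IsStarTerm x) :
    HasForm IsStarTerm y → HasForm IsStarTerm (x ⋏ y)
  | ⟨_, h, hy⟩ => hy ▸ (h.hasForm_starTerm_and hx).mono .c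

theorem snf_of_tTerm : HasForm IsTTerm x → HasForm IsSNF x := mono .inl

theorem snf_of_fTerm : HasForm IsFTerm x → HasForm IsSNF x := mono fun h => .inr (.inl h)

theorem snf_of_tTerm_and : HasForm IsTTerm x → HasForm IsStarTerm y → HasForm IsSNF (x ⋏ y) :=
  .and fun hQ hR => .inr (.inr ⟨_, _, hQ, hR, rfl⟩)

theorem snf_cases : HasForm IsSNF x → HasForm IsTTerm x ∨ HasForm IsFTerm x ∨
    ∃ t s, HasForm IsTTerm t ∧ HasForm IsStarTerm s ∧ x = t ⋏ s
  | ⟨P, .inl hP, hx⟩ => .inl ⟨P, hP, hx⟩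
  | ⟨P, .inr (.inl hP), hx⟩ => .inr (.inl ⟨P, hP, hx⟩)
  | ⟨_, .inr (.inr ⟨Q, R, hQ, hR, rfl⟩), hx⟩ =>
    .inr (.inr ⟨_, _, ⟨Q, hQ, rfl⟩, ⟨R, hR, rfl⟩, hx.symm⟩)

theorem snf_atom (a : A) : HasForm IsSNF (atom a) := by
  have h : atom a = T ⋏ (atom a ⋏ T ⋎ F) := by rw [T_and, or_F, and_T]
  rw [h]
  exact tTerm_T.snf_of_tTerm_and ⟨_, .c (.ell (.pos a .tt .ff)), rfl⟩

theorem snf_neg (h : HasForm IsSNF x) : HasForm IsSNF (-x) := by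
  rcases h.snf_cases with ht | hf | ⟨t, s, ht, hs, rfl⟩
  · exact ht.tTerm_neg.snf_of_fTerm
  · exact hf.fTerm_neg.snf_of_tTerm
  · rw [neg_and_of_or_T ht.or_T]
    exact ht.snf_of_tTerm_and hs.starTerm_neg

theorem snf_and (hx : HasForm IsSNF x) (hy : HasForm IsSNF y) : HasForm IsSNF (x ⋏ y) := by
  rcases hx.snf_cases with hx | hx | ⟨t, s, ht, hs, rfl⟩
  · rcases hy.snf_cases with hy | hy | ⟨t', s', ht', hs', rfl⟩
    · exact (hx.tTerm_and hy).snf_of_tTerm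
    · exact (hx.tTerm_and_fTerm hy).snf_of_fTerm
    · rw [← SCL.and_assoc]
      exact (hx.tTerm_and ht').snf_of_tTerm_and hs'
  · rw [and_eq_of_and_F hx.and_F]
    exact hx.snf_of_fTerm
  · rw [SCL.and_assoc]
    rcases hy.snf_cases with hy | hy | ⟨t', s', ht', hs', rfl⟩
    · exact ht.snf_of_tTerm_and (hs.starTerm_and_tTerm hy)
    · exact (ht.tTerm_and_fTerm (hs.starTerm_and_fTerm hy)).snf_of_fTerm
    · rw [← SCL.and_assoc s]
      exact ht.snf_of_tTerm_and ((hs.starTerm_and_tTerm ht').starTerm_and_starTerm hs')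

theorem snf_or (hx : HasForm IsSNF x) (hy : HasForm IsSNF y) : HasForm IsSNF (x ⋎ y) := by
  rw [or_eq_neg_and]
  exact (hx.snf_neg.snf_and hy.snf_neg).snf_neg

end SCL.HasForm

/-- Existence of SCL normal forms: every closed term is derivably equal to an SNF-term. -/
theorem exists_snf {A : Type} [Nonempty A] (P : STerm A) :
    ∃ Q : STerm A, IsSNF Q ∧ EqFSCL P Q := by
  suffices h : SCL.HasForm IsSNF (SCL.mk P) by
    obtain ⟨Q, hQ, hQP⟩ := h
    exact ⟨Q, hQ, SCL.mk_eq_mk.1 hQP.symm⟩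
  induction P with
  | atom a => exact .snf_atom a
  | tt => exact SCL.HasForm.tTerm_T.snf_of_tTerm
  | ff => exact SCL.HasForm.fTerm_F.snf_of_fTerm
  | neg P ih => exact ih.snf_neg
  | and P Q ihP ihQ => exact ihP.snf_and ihQ
  | or P Q ihP ihQ => exact ihP.snf_or ihQ
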